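/- arXiv:2006.07851 — 3 statements merged into one kernel-verified Lean document; each statement's English description precedes it below -/
import Mathlib

section
/- Let g : (0, ∞) → ℝ be differentiable, concave, non-decreasing, and positive. Fix ε > 0 and consecutive breakpoints b_{k-1} < b_k with tangent point μₖ ∈ (b_{k-1}, b_k) such that the tangent line ℓ(μ) = g(μₖ) + g′(μₖ)(μ − μₖ) satisfies ℓ(b_{k-1}) = (1+ε)g(b_{k-1}) and ℓ(b_k) = (1+ε)g(b_k). Then for every μ ∈ [b_{k-1}, b_k], 0 ≤ (ℓ(μ) − g(μ))/g(μ) ≤ ε. -/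
/-! The tangent line of a concave function lies above it, which gives the lower bound. For the
upper bound, `(1 + ε) g` is concave and dominates the tangent line at both breakpoints, hence on
the whole segment between them. -/

open Set

theorem ConcaveOn.le_tangent_of_hasDerivAt {S : Set ℝ} {f : ℝ → ℝ} {f' x y : ℝ}
    (hf : ConcaveOn ℝ S f) (hx : x ∈ S) (hy : y ∈ S) (hfd : HasDerivAt f f' x) :
    f y ≤ f x + f' * (y - x) := by
  rcases lt_trichotomy y x with hyx | rfl | hxy
  · have hslope := hf.le_slope_of_hasDerivAt hy hx hyx hfd
    rw [slope_def_field, le_div_iff₀ (sub_pos.2 hyx)] at hslope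
    linarith
  · simp
  · have hslope := hf.slope_le_of_hasDerivAt hx hy hxy hfd
    rw [slope_def_field, div_le_iff₀ (sub_pos.2 hxy)] at hslope
    linarith

theorem ConcaveOn.affine_le_of_mem_Icc {s : Set ℝ} {f : ℝ → ℝ} {c m x₀ a b z : ℝ}
    (hf : ConcaveOn ℝ s f) (ha : a ∈ s) (hb : b ∈ s)
    (hfa : c + m * (a - x₀) ≤ f a) (hfb : c + m * (b - x₀) ≤ f b) (hz : z ∈ Icc a b) :
    c + m * (z - x₀) ≤ f z := by
  rw [← segment_eq_Icc (hz.1.trans hz.2)] at hz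
  obtain ⟨t, u, ht, hu, htu, rfl⟩ := hz
  calc c + m * (t • a + u • b - x₀)
      = t * (c + m * (a - x₀)) + u * (c + m * (b - x₀)) := by
        simp only [smul_eq_mul]; linear_combination (c - m * x₀) * htu.symm
    _ ≤ t • f a + u • f b := by
        simp only [smul_eq_mul]; gcongr
    _ ≤ f (t • a + u • b) := hf.2 ha hb ht hu htu

theorem piecewise_linearization_relative_error_general
    (g g' : ℝ → ℝ) (ε : ℝ) (b₀ b₁ μk : ℝ)
    (hderiv : ∀ x ∈ Set.Ioi (0 : ℝ), HasDerivAt g (g' x) x)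
    (hconc : ConcaveOn ℝ (Set.Ioi (0 : ℝ)) g)
    (hpos : ∀ x ∈ Set.Ioi (0 : ℝ), 0 < g x)
    (hε : 0 < ε) (hb₀ : 0 < b₀)
    (hμk : μk ∈ Set.Ioo b₀ b₁)
    (h0 : g μk + g' μk * (b₀ - μk) = (1 + ε) * g b₀)
    (h1 : g μk + g' μk * (b₁ - μk) = (1 + ε) * g b₁) :
    ∀ μ ∈ Set.Icc b₀ b₁,
      0 ≤ ((g μk + g' μk * (μ - μk)) - g μ) / g μ ∧
      ((g μk + g' μk * (μ - μk)) - g μ) / g μ ≤ ε := by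
  intro μ hμ
  have hμ_pos : μ ∈ Ioi (0 : ℝ) := hb₀.trans_le hμ.1
  have hμk_pos : μk ∈ Ioi (0 : ℝ) := hb₀.trans hμk.1
  have hb₁_pos : b₁ ∈ Ioi (0 : ℝ) := hμ_pos.trans_le hμ.2
  have hgμ := hpos μ hμ_pos
  have hlower := hconc.le_tangent_of_hasDerivAt hμk_pos hμ_pos (hderiv μk hμk_pos)
  have hupper : g μk + g' μk * (μ - μk) ≤ (1 + ε) * g μ :=
    (hconc.smul (by positivity)).affine_le_of_mem_Icc hb₀ hb₁_pos h0.le h1.le hμ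
  constructor
  · exact div_nonneg (by linarith) hgμ.le
  · rw [div_le_iff₀ hgμ]
    linarith

theorem piecewise_linearization_relative_error
    (g g' : ℝ → ℝ) (ε : ℝ) (b₀ b₁ μk : ℝ)
    (hderiv : ∀ x ∈ Set.Ioi (0 : ℝ), HasDerivAt g (g' x) x)
    (hconc : ConcaveOn ℝ (Set.Ioi (0 : ℝ)) g)
    (hmono : MonotoneOn g (Set.Ioi (0 : ℝ)))
    (hpos : ∀ x ∈ Set.Ioi (0 : ℝ), 0 < g x)
    (hε : 0 < ε) (hb₀ : 0 < b₀) (hbb : b₀ < b₁)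
    (hμk : μk ∈ Set.Ioo b₀ b₁)
    (h0 : g μk + g' μk * (b₀ - μk) = (1 + ε) * g b₀)
    (h1 : g μk + g' μk * (b₁ - μk) = (1 + ε) * g b₁) :
    ∀ μ ∈ Set.Icc b₀ b₁,
      0 ≤ ((g μk + g' μk * (μ - μk)) - g μ) / g μ ∧
      ((g μk + g' μk * (μ - μk)) - g μ) / g μ ≤ ε :=
  piecewise_linearization_relative_error_general g g' ε b₀ b₁ μk hderiv hconc hpos hε hb₀ hμk h0 h1
end

section
/- Let d : J → ℝ and b : J → ℝ≥0 on a finite index set J, and define h(y) = Σⱼ dⱼyⱼ + √(Σⱼ bⱼ yⱼ) for y ∈ {0,1}^J. If dⱼ ≥ 0 then there is an optimal solution y* of min h with y*ⱼ = 0; and if dⱼ < 0 and bⱼ = 0 then every optimal solution has yⱼ = 1. -/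
/-!
Since `bⱼ ≥ 0`, switching `yⱼ` from 1 to 0 lowers both the linear term and the radicand when
`dⱼ ≥ 0`, so it turns any minimiser (one exists, as `{0,1}^J` is finite) into a minimiser with
`yⱼ = 0`. When `dⱼ < 0` and `bⱼ = 0`, switching `yⱼ` from 0 to 1 lowers the linear term and leaves
the radicand unchanged, so no minimiser has `yⱼ = 0`.
-/

open Function

variable {J : Type} [Fintype J] [DecidableEq J]

theorem Finset.sum_mul_update {R : Type} [CommRing R] (f y : J → R) (j : J) (c : R) :
    ∑ i, f i * update y j c i = ∑ i, f i * y i + f j * (c - y j) := by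
  have hupdate : update y j c = y + Pi.single j (c - y j) := by
    ext i
    rcases eq_or_ne i j with rfl | hij <;> simp [*]
  simp [hupdate, mul_add, Finset.sum_add_distrib, Pi.single_apply]

noncomputable def linearSqrtObjective (d b y : J → ℝ) : ℝ :=
  (∑ i, d i * y i) + √(∑ i, b i * y i)

variable {d b y : J → ℝ} {j : J}

theorem linearSqrtObjective_update_zero_le (hd : 0 ≤ d j) (hb : 0 ≤ b j) (hy : 0 ≤ y j) :
    linearSqrtObjective d b (update y j 0) ≤ linearSqrtObjective d b y := by
  unfold linearSqrtObjective
  rw [Finset.sum_mul_update, Finset.sum_mul_update, zero_sub, mul_neg, mul_neg]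
  exact add_le_add (add_le_of_nonpos_right (neg_nonpos.mpr (mul_nonneg hd hy)))
    (Real.sqrt_le_sqrt (add_le_of_nonpos_right (neg_nonpos.mpr (mul_nonneg hb hy))))

theorem linearSqrtObjective_update_one_lt (hd : d j < 0) (hb : b j = 0) (hy : y j = 0) :
    linearSqrtObjective d b (update y j 1) < linearSqrtObjective d b y := by
  unfold linearSqrtObjective
  rw [Finset.sum_mul_update, Finset.sum_mul_update, hb, hy, zero_mul, add_zero, sub_zero, mul_one]
  linarith

theorem binary_linear_sqrt_min_fixing
    {J : Type} [Fintype J] (d : J → ℝ) (b : J → ℝ) (hb : ∀ j, 0 ≤ b j) (j : J) :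
    let Binary : (J → ℝ) → Prop := fun y => ∀ i, y i = 0 ∨ y i = 1
    let h : (J → ℝ) → ℝ := fun y => (∑ i, d i * y i) + Real.sqrt (∑ i, b i * y i)
    (d j ≥ 0 →
      ∃ y : J → ℝ, Binary y ∧ (∀ z : J → ℝ, Binary z → h y ≤ h z) ∧ y j = 0) ∧
    (d j < 0 → b j = 0 →
      ∀ y : J → ℝ, Binary y → (∀ z : J → ℝ, Binary z → h y ≤ h z) → y j = 1) := by
  intro Binary h
  classical
  have binary_update : ∀ y c, Binary y → (c = 0 ∨ c = 1) → Binary (update y j c) :=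
    fun y _ hy hc => (forall_update_iff y fun _ v => v = 0 ∨ v = 1).2 ⟨hc, fun i _ => hy i⟩
  refine ⟨fun hdj => ?_, fun hdj hbj y hy hmin => ?_⟩
  · have hfinite : {y | Binary y}.Finite :=
      (Set.Finite.pi fun _ => Set.toFinite {0, 1}).subset fun y hy i _ => hy i
    obtain ⟨y, hy, hmin⟩ := Set.exists_min_image _ h hfinite ⟨0, fun _ => Or.inl rfl⟩
    have hle : h (update y j 0) ≤ h y := linearSqrtObjective_update_zero_le hdj (hb j)
      ((hy j).elim (·.ge) fun h1 => h1 ▸ zero_le_one)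
    exact ⟨update y j 0, binary_update y 0 hy (Or.inl rfl),
      fun z hz => hle.trans (hmin z hz), update_self j 0 y⟩
  · refine (hy j).resolve_left fun hy0 => ?_
    exact (linearSqrtObjective_update_one_lt hdj hbj hy0).not_ge
      (hmin _ (binary_update y 1 hy (Or.inr rfl)))
end

section
/- Let Ĵ be a finite index set with dⱼ < 0 and bⱼ > 0 for all j ∈ Ĵ, ordered so that d₁/b₁ ≤ d₂/b₂ ≤ … ≤ d_{|Ĵ|}/b_{|Ĵ|}. Then there exists an optimal solution of min over y ∈ {0,1}^Ĵ of h(y) = Σⱼ dⱼyⱼ + √(Σⱼ bⱼyⱼ) of the form y₁ = … = y_m = 1, y_{m+1} = … = y_{|Ĵ|} = 0 for some 0 ≤ m ≤ |Ĵ| (i.e., an optimal solution selecting a prefix of the ordering). -/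
/-!
Take a minimiser `S` of the cost `∑ i ∈ S, d i + √(∑ i ∈ S, b i)` of maximal cardinality and
suppose `i ≤ j`, `j ∈ S`, `i ∉ S`; write `B = ∑ k ∈ S, b k`. Adding `i` must strictly raise the
cost, i.e. `d i / b i > -1 / (√B + √(B + b i))`. Since the ratios are sorted and
`√(B - b j) ≤ √(B + b i)`, this gives `d j / b j > -1 / (√(B - b j) + √B)`, which says exactly
that removing `j` strictly lowers the cost. Hence `S` is an initial segment of the order.
-/
open Finset

theorem Real.sqrt_sub_sqrt_eq_div {x y : ℝ} (hx : 0 ≤ x) (hy : 0 ≤ y) (hxy : 0 < √x + √y) :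
    √x - √y = (x - y) / (√x + √y) := by
  rw [eq_div_iff hxy.ne']
  linear_combination Real.sq_sqrt hx - Real.sq_sqrt hy

theorem Real.sqrt_sub_lt_add_sqrt_of_div_le {B bi bj di dj : ℝ} (hbi : 0 < bi) (hbj : 0 < bj)
    (hbjB : bj ≤ B) (hratio : di / bi ≤ dj / bj) (hgain : √B < di + √(B + bi)) :
    √(B - bj) < dj + √B := by
  have hB : 0 < B := hbj.trans_le hbjB
  have hs : 0 < √B := Real.sqrt_pos.2 hB
  have hsp : 0 < √B + √(B + bi) := by positivity
  have hsq : 0 < √(B - bj) + √B := by positivity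
  have hi : -1 / (√B + √(B + bi)) < di / bi := by
    rw [lt_div_iff₀ hbi]
    have := Real.sqrt_sub_sqrt_eq_div hB.le (by linarith) hsp
    rw [show B - (B + bi) = -1 * bi by ring, mul_div_right_comm] at this
    linarith
  have hmono : -1 / (√(B - bj) + √B) ≤ -1 / (√B + √(B + bi)) := by
    rw [neg_div, neg_div, neg_le_neg_iff]
    exact one_div_le_one_div_of_le hsq (by rw [add_comm]; gcongr; linarith)
  have hj : -1 / (√(B - bj) + √B) * bj < dj := (lt_div_iff₀ hbj).1 (by linarith)
  have := Real.sqrt_sub_sqrt_eq_div (by linarith) hB.le hsq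
  rw [show B - bj - B = -1 * bj by ring, mul_div_right_comm] at this
  linarith

theorem exists_minimizer_maximal_on_minimizers {β : Type*} [Fintype β] [Nonempty β] {α γ : Type*}
    [LinearOrder α] [LinearOrder γ] (f : β → α) (g : β → γ) :
    ∃ x, (∀ y, f x ≤ f y) ∧ ∀ y, f y ≤ f x → g y ≤ g x := by
  obtain ⟨x₀, -, hx₀⟩ := exists_min_image univ f univ_nonempty
  obtain ⟨x, hx, hmax⟩ := exists_max_image ({y | f y ≤ f x₀} : Finset β) g ⟨x₀, by simp⟩
  rw [mem_filter_univ] at hx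
  exact ⟨x, fun y => hx.trans (hx₀ y (mem_univ y)),
    fun y hy => hmax y ((mem_filter_univ y).2 (hy.trans hx))⟩

section LinearSqrtCost

variable {ι : Type*} (d b : ι → ℝ)

noncomputable def linearSqrtCost (S : Finset ι) : ℝ := ∑ i ∈ S, d i + √(∑ i ∈ S, b i)

variable {d b} [DecidableEq ι]

theorem linearSqrtCost_erase_lt_of_lt_linearSqrtCost_insert (hb : ∀ i, 0 < b i) {S : Finset ι}
    {i j : ι} (hi : i ∉ S) (hj : j ∈ S) (hratio : d i / b i ≤ d j / b j)
    (hgain : linearSqrtCost d b S < linearSqrtCost d b (insert i S)) :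
    linearSqrtCost d b (S.erase j) < linearSqrtCost d b S := by
  simp only [linearSqrtCost, sum_insert hi, sum_erase_eq_sub hj] at hgain ⊢
  have := Real.sqrt_sub_lt_add_sqrt_of_div_le (hb i) (hb j)
    (single_le_sum (fun k _ => (hb k).le) hj) hratio (by rw [add_comm (b i)] at hgain; linarith)
  linarith

theorem exists_isLowerSet_linearSqrtCost_le [Fintype ι] [Preorder ι] (hb : ∀ i, 0 < b i)
    (hsorted : ∀ i j, i ≤ j → d i / b i ≤ d j / b j) :
    ∃ S : Finset ι, IsLowerSet (S : Set ι) ∧ ∀ T, linearSqrtCost d b S ≤ linearSqrtCost d b T := by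
  obtain ⟨S, hmin, hmax⟩ := exists_minimizer_maximal_on_minimizers (linearSqrtCost d b) card
  refine ⟨S, fun j i hij hj => ?_, hmin⟩
  by_contra hi
  rcases le_or_gt (linearSqrtCost d b (insert i S)) (linearSqrtCost d b S) with hle | hgain
  · have := hmax _ hle
    rw [card_insert_of_notMem hi] at this
    omega
  · exact (linearSqrtCost_erase_lt_of_lt_linearSqrtCost_insert hb hi hj (hsorted i j hij)
      hgain).not_ge (hmin _)

theorem sum_mul_ite_mem {R : Type*} [NonAssocSemiring R] [Fintype ι] (f : ι → R) (S : Finset ι) :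
    ∑ i, f i * (if i ∈ S then 1 else 0) = ∑ i ∈ S, f i := by
  simp [mul_ite]

end LinearSqrtCost

theorem Fin.exists_forall_mem_iff_lt_of_isLowerSet {n : ℕ} {S : Finset (Fin n)}
    (hS : IsLowerSet (S : Set (Fin n))) : ∃ m ≤ n, ∀ i : Fin n, i ∈ S ↔ (i : ℕ) < m := by
  rcases hS.eq_univ_or_Iio with h | ⟨a, h⟩
  · exact ⟨n, le_rfl, fun i => by simpa [i.isLt] using Set.ext_iff.1 h i⟩
  · exact ⟨a, a.isLt.le, fun i => by simpa using Set.ext_iff.1 h i⟩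

theorem binary_linear_sqrt_prefix_optimal_general
    (n : ℕ) (d b : Fin n → ℝ)
    (hb : ∀ j, 0 < b j)
    (hsorted : ∀ i j : Fin n, i ≤ j → d i / b i ≤ d j / b j) :
    let Binary : (Fin n → ℝ) → Prop := fun y => ∀ i, y i = 0 ∨ y i = 1
    let h : (Fin n → ℝ) → ℝ := fun y => (∑ i, d i * y i) + Real.sqrt (∑ i, b i * y i)
    ∃ m : ℕ, m ≤ n ∧
      (∀ z : Fin n → ℝ, Binary z →
        h (fun i => if (i : ℕ) < m then (1 : ℝ) else 0) ≤ h z) := by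
  intro Binary h
  have h_indicator (S : Finset (Fin n)) :
      h (fun i => if i ∈ S then 1 else 0) = linearSqrtCost d b S := by
    simp only [h, linearSqrtCost, sum_mul_ite_mem]
  obtain ⟨S, hlower, hmin⟩ := exists_isLowerSet_linearSqrtCost_le hb hsorted
  obtain ⟨m, hmn, hS⟩ := Fin.exists_forall_mem_iff_lt_of_isLowerSet hlower
  refine ⟨m, hmn, fun z hz => ?_⟩
  have hz_eq : z = fun i => if i ∈ ({i | z i = 1} : Finset (Fin n)) then 1 else 0 := by
    ext i
    rcases hz i with hz0 | hz1 <;> simp [*]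
  simp only [← hS]
  rw [hz_eq, h_indicator, h_indicator]
  exact hmin _

theorem binary_linear_sqrt_prefix_optimal
    (n : ℕ) (d b : Fin n → ℝ)
    (hd : ∀ j, d j < 0) (hb : ∀ j, 0 < b j)
    (hsorted : ∀ i j : Fin n, i ≤ j → d i / b i ≤ d j / b j) :
    let Binary : (Fin n → ℝ) → Prop := fun y => ∀ i, y i = 0 ∨ y i = 1
    let h : (Fin n → ℝ) → ℝ := fun y => (∑ i, d i * y i) + Real.sqrt (∑ i, b i * y i)
    ∃ m : ℕ, m ≤ n ∧
      (∀ z : Fin n → ℝ, Binary z →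
        h (fun i => if (i : ℕ) < m then (1 : ℝ) else 0) ≤ h z) :=
  binary_linear_sqrt_prefix_optimal_general n d b hb hsorted
end
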